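/- Suppose a graph G has the (a, n/2, ρ)-expansion-property for some ρ ∈ (0,1], where n = |V(G)|. Then for all vertex sets X, Y ⊆ V(G) with |X|, |Y| ≥ x ≥ 2a and every W ⊆ V(G) with |W| ≤ ρx/4, there exists a path in G − W connecting X and Y of length at most 10·ρ^{-1}·log(n/x). -/

import Mathlib

open Finset SimpleGraph
open scoped Classical

variable {V : Type*}

/-- Number of ordered adjacent pairs inside `S` (= sum of degrees in the induced subgraph). -/
noncomputable def degSum [Fintype V] (G : SimpleGraph V) (S : Finset V) : ℕ :=
  ((S ×ˢ S).filter fun p => G.Adj p.1 p.2).card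

/-- Average degree of the subgraph of `G` induced on `S`. -/
noncomputable def avgDegOn [Fintype V] (G : SimpleGraph V) (S : Finset V) : ℝ :=
  (degSum G S : ℝ) / (S.card : ℝ)

/-- Average degree of `G`. -/
noncomputable def avgDeg [Fintype V] (G : SimpleGraph V) : ℝ :=
  avgDegOn G Finset.univ

/-- `cruxSize α G` is the minimum order of a subgraph of `G` with average degree at least
`α · d(G)` (equivalently, of a vertex set inducing such a subgraph). -/
noncomputable def cruxSize [Fintype V] (α : ℝ) (G : SimpleGraph V) : ℕ :=
  sInf {m | ∃ S : Finset V, S.card = m ∧ α * avgDeg G ≤ avgDegOn G S}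

/-- Number of edges between `S` and its complement (counted as ordered pairs from `S` out). -/
noncomputable def crossPairs [Fintype V] (G : SimpleGraph V) (S : Finset V) : ℕ :=
  ((S ×ˢ Sᶜ).filter fun p => G.Adj p.1 p.2).card

/-- External neighbourhood of `A` in the graph `G − D`. -/
noncomputable def nbhdIn [Fintype V] (G : SimpleGraph V) (D A : Finset V) : Finset V :=
  Finset.univ.filter fun v => v ∉ D ∧ v ∉ A ∧ ∃ u ∈ A, G.Adj u v

/-- Ball of radius `r` around `A` in the graph `G − D`. -/
noncomputable def ballIn [Fintype V] (G : SimpleGraph V) (D A : Finset V) : ℕ → Finset V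
  | 0 => A
  | r + 1 => ballIn G D A r ∪ nbhdIn G D (ballIn G D A r)

/-- `G` has the `(a, b, ρ)`-expansion-property. -/
def ExpansionProperty [Fintype V] (G : SimpleGraph V) (a b ρ : ℝ) : Prop :=
  ∀ X : Finset V, a ≤ (X.card : ℝ) → (X.card : ℝ) ≤ b →
    ρ * (X.card : ℝ) ≤ ((nbhdIn G ∅ X).card : ℝ)

/-- The Komlós–Szemerédi expansion rate function. -/
noncomputable def rho (ε k x : ℝ) : ℝ :=
  if k / 5 ≤ x then ε / (Real.log (15 * x / k)) ^ 2 else 0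

/-- `(ε, k)`-robust-expander. -/
def RobustExpander [Fintype V] (G : SimpleGraph V) (ε k : ℝ) : Prop :=
  ∀ X : Finset V, k / 2 ≤ (X.card : ℝ) → (X.card : ℝ) ≤ (Fintype.card V : ℝ) / 2 →
    ∀ F : Finset (Sym2 V), ↑F ⊆ G.edgeSet →
      (F.card : ℝ) ≤ avgDeg G * rho ε k (X.card : ℝ) * (X.card : ℝ) →
      rho ε k (X.card : ℝ) * (X.card : ℝ) ≤ ((nbhdIn (G.deleteEdges ↑F) ∅ X).card : ℝ)

/-- `G` contains a subdivision of the graph `H` (on vertex set `Fin t`): there are `t` distinct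
core vertices and internally vertex-disjoint paths for the edges of `H`, whose internal
vertices avoid the cores. -/
def ContainsSubdivision {t : ℕ} (H : SimpleGraph (Fin t)) (G : SimpleGraph V) : Prop :=
  ∃ c : Fin t ↪ V, ∃ p : ∀ i j : Fin t, i < j → H.Adj i j → G.Walk (c i) (c j),
    (∀ i j (h : i < j) (ha : H.Adj i j), (p i j h ha).IsPath) ∧
    (∀ i j (h : i < j) (ha : H.Adj i j) (k : Fin t),
        c k ∈ (p i j h ha).support → k = i ∨ k = j) ∧
    (∀ i j (h : i < j) (ha : H.Adj i j) i' j' (h' : i' < j') (ha' : H.Adj i' j'),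
        (i, j) ≠ (i', j') →
        Disjoint ((p i j h ha).support.toFinset \ {c i, c j})
          ((p i' j' h' ha').support.toFinset \ {c i', c j'}))

/-- `G` contains a copy of `H` as a subgraph. -/
def ContainsCopy {W₀ : Type*} (H : SimpleGraph W₀) (G : SimpleGraph V) : Prop :=
  ∃ f : W₀ → V, Function.Injective f ∧ ∀ a b, H.Adj a b → G.Adj (f a) (f b)

/-- Clique number of `G`. -/
noncomputable def cliqueNumber [Fintype V] (G : SimpleGraph V) : ℕ :=
  sSup {n | ∃ s : Finset V, G.IsNClique n s}

/-!
Grow balls around `X \ W` and `Y \ W` in `G - W`. Removing `W` costs at most `|W| ≤ ρ|S|/2`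
neighbours of a set `S ⊇ X \ W`, so while a ball has at most `n/2` vertices it grows by a factor
`1 + ρ/2` per step. Since `log (1 + ρ/2) ≥ ρ/3`, after `⌊5ρ⁻¹ log (n/x)⌋` steps both balls have more
than `n/2` vertices, hence meet, and the two radii give a path of length at most
`10ρ⁻¹ log (n/x)`.
-/

lemma div_three_le_log_one_add_half {ρ : ℝ} (hρ0 : 0 ≤ ρ) (hρ1 : ρ ≤ 1) :
    ρ / 3 ≤ Real.log (1 + ρ / 2) := by
  have hinv : (1 + ρ / 2)⁻¹ ≤ 1 - ρ / 3 := by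
    rw [inv_le_iff_one_le_mul₀ (by positivity)]
    nlinarith
  linarith [Real.one_sub_inv_le_log_of_pos (show 0 < 1 + ρ / 2 by positivity)]

lemma two_thirds_mul_lt_pow_floor {ρ y : ℝ} (hρ0 : 0 < ρ) (hρ1 : ρ ≤ 1) (hy : 1 ≤ y) :
    2 / 3 * y < (1 + ρ / 2) ^ ⌊5 * ρ⁻¹ * Real.log y⌋₊ := by
  set L := Real.log y
  set r := ⌊5 * ρ⁻¹ * L⌋₊
  have hL : 0 ≤ L := Real.log_nonneg hy
  have hr : 5 * L < (r + 1) * ρ :=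
    calc 5 * L = 5 * ρ⁻¹ * L * ρ := by field_simp
      _ < (r + 1) * ρ := mul_lt_mul_of_pos_right (Nat.lt_floor_add_one _) hρ0
  have hexponent : L - 1 / 3 < r * Real.log (1 + ρ / 2) := by
    nlinarith [mul_le_mul_of_nonneg_left (div_three_le_log_one_add_half hρ0.le hρ1) r.cast_nonneg]
  calc 2 / 3 * y ≤ Real.exp (-(1 / 3)) * y := by
        gcongr
        linarith [Real.add_one_le_exp (-(1 / 3))]
    _ = Real.exp (L - 1 / 3) := by
        rw [sub_eq_add_neg, Real.exp_add, Real.exp_log (by linarith), mul_comm]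
    _ < Real.exp (r * Real.log (1 + ρ / 2)) := Real.exp_lt_exp.2 hexponent
    _ = (1 + ρ / 2) ^ r := by rw [← Real.log_pow, Real.exp_log (by positivity)]

section Balls

variable [Fintype V] {G : SimpleGraph V} {D A B S : Finset V}

lemma mem_nbhdIn {v : V} : v ∈ nbhdIn G D A ↔ v ∉ D ∧ v ∉ A ∧ ∃ u ∈ A, G.Adj u v := by
  simp [nbhdIn]

lemma card_nbhdIn_empty_le : #(nbhdIn G ∅ S) ≤ #(nbhdIn G D S) + #D := by
  refine (card_le_card fun v hv => ?_).trans (card_union_le _ _)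
  obtain ⟨-, hvS, hadj⟩ := mem_nbhdIn.1 hv
  by_cases hvD : v ∈ D
  · exact mem_union_right _ hvD
  · exact mem_union_left _ (mem_nbhdIn.2 ⟨hvD, hvS, hadj⟩)

lemma card_union_nbhdIn : #(S ∪ nbhdIn G D S) = #S + #(nbhdIn G D S) :=
  card_union_of_disjoint <| disjoint_right.2 fun _ hv => (mem_nbhdIn.1 hv).2.1

lemma ballIn_succ (r : ℕ) : ballIn G D A (r + 1) = ballIn G D A r ∪ nbhdIn G D (ballIn G D A r) :=
  rfl

lemma ballIn_subset_succ (r : ℕ) : ballIn G D A r ⊆ ballIn G D A (r + 1) :=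
  subset_union_left

lemma subset_ballIn (r : ℕ) : A ⊆ ballIn G D A r := by
  induction r with
  | zero => rfl
  | succ r ih => exact ih.trans (ballIn_subset_succ r)

lemma disjoint_ballIn (hA : Disjoint A D) (r : ℕ) : Disjoint (ballIn G D A r) D := by
  induction r with
  | zero => exact hA
  | succ r ih => exact disjoint_union_left.2 ⟨ih, disjoint_left.2 fun _ hv => (mem_nbhdIn.1 hv).1⟩

lemma exists_walk_of_mem_ballIn {r : ℕ} {z : V} (hz : z ∈ ballIn G D A r) :
    ∃ u ∈ A, ∃ p : G.Walk u z, p.length ≤ r ∧ ∀ w ∈ p.support, w ∈ ballIn G D A r := by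
  induction r generalizing z with
  | zero => exact ⟨z, hz, Walk.nil, le_rfl, by simpa using hz⟩
  | succ r ih =>
    rcases mem_union.1 hz with hz' | hz'
    · obtain ⟨u, hu, p, hlen, hsupp⟩ := ih hz'
      exact ⟨u, hu, p, hlen.trans r.le_succ, fun w hw => ballIn_subset_succ r (hsupp w hw)⟩
    · obtain ⟨-, -, y, hy, hadj⟩ := mem_nbhdIn.1 hz'
      obtain ⟨u, hu, p, hlen, hsupp⟩ := ih hy
      refine ⟨u, hu, p.concat hadj, by simpa using hlen, fun w hw => ?_⟩
      rcases List.mem_append.1 (Walk.support_concat p hadj ▸ hw) with hw | hw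
      · exact ballIn_subset_succ r (hsupp w hw)
      · rwa [List.mem_singleton.1 hw]

lemma exists_path_of_mem_ballIn_inter {r s : ℕ} {z : V} (hA : Disjoint A D) (hB : Disjoint B D)
    (hzA : z ∈ ballIn G D A r) (hzB : z ∈ ballIn G D B s) :
    ∃ (u v : V) (p : G.Walk u v), u ∈ A ∧ v ∈ B ∧ p.IsPath ∧ (∀ w ∈ p.support, w ∉ D) ∧
      p.length ≤ r + s := by
  obtain ⟨u, hu, p, hp, hpD⟩ := exists_walk_of_mem_ballIn hzA
  obtain ⟨v, hv, q, hq, hqD⟩ := exists_walk_of_mem_ballIn hzB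
  refine ⟨u, v, (p.append q.reverse).bypass, hu, hv, Walk.bypass_isPath _, fun w hw => ?_, ?_⟩
  · rcases (Walk.mem_support_append_iff _ _).1 (Walk.support_bypass_subset_support _ hw)
      with hw | hw
    · exact disjoint_left.1 (disjoint_ballIn hA r) (hpD w hw)
    · exact disjoint_left.1 (disjoint_ballIn hB s) (hqD w (by simpa using hw))
  · have := Walk.length_bypass_le_length (p.append q.reverse)
    rw [Walk.length_append, Walk.length_reverse] at this
    omega

namespace ExpansionProperty

variable {a b ρ : ℝ}

lemma mul_card_le_card_union_nbhdIn (hG : ExpansionProperty G a b ρ) (haS : a ≤ #S)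
    (hSb : (#S : ℝ) ≤ b) (hD : (#D : ℝ) ≤ ρ * #S / 2) :
    (1 + ρ / 2) * #S ≤ #(S ∪ nbhdIn G D S) := by
  have hexp := hG S haS hSb
  have hloss : (#(nbhdIn G ∅ S) : ℝ) ≤ #(nbhdIn G D S) + #D := mod_cast card_nbhdIn_empty_le
  rw [card_union_nbhdIn, Nat.cast_add]
  linarith

lemma mul_pow_le_card_ballIn (hG : ExpansionProperty G a b ρ) (haA : a ≤ #A)
    (hD : (#D : ℝ) ≤ ρ * #A / 2) (hρ : 0 ≤ ρ) {r : ℕ} (hr : (#(ballIn G D A r) : ℝ) ≤ b) :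
    #A * (1 + ρ / 2) ^ r ≤ #(ballIn G D A r) := by
  induction r with
  | zero => simp [ballIn]
  | succ r ih =>
    have hsub : (#A : ℝ) ≤ #(ballIn G D A r) := mod_cast card_le_card (subset_ballIn r)
    have hrb : (#(ballIn G D A r) : ℝ) ≤ b :=
      le_trans (mod_cast card_le_card (ballIn_subset_succ r)) hr
    have hgrow := hG.mul_card_le_card_union_nbhdIn (haA.trans hsub) hrb
      (hD.trans (by gcongr))
    calc (#A : ℝ) * (1 + ρ / 2) ^ (r + 1) = (1 + ρ / 2) * (#A * (1 + ρ / 2) ^ r) := by ring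
      _ ≤ (1 + ρ / 2) * #(ballIn G D A r) := by gcongr; exact ih hrb
      _ ≤ #(ballIn G D A (r + 1)) := hgrow

end ExpansionProperty

end Balls

/-- short paths between large sets avoiding a small set, in a graph with the
`(a, n/2, ρ)`-expansion-property. -/
theorem statement_11 [Fintype V] (G : SimpleGraph V) (a ρ : ℝ)
    (hρ0 : 0 < ρ) (hρ1 : ρ ≤ 1) (ha : 0 < a)
    (hG : ExpansionProperty G a ((Fintype.card V : ℝ) / 2) ρ)
    (X Y W : Finset V) (x : ℝ) (hx : 2 * a ≤ x)
    (hX : x ≤ (X.card : ℝ)) (hY : x ≤ (Y.card : ℝ))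
    (hW : (W.card : ℝ) ≤ ρ * x / 4) :
    ∃ (u v : V) (p : G.Walk u v), u ∈ X ∧ v ∈ Y ∧ p.IsPath ∧
      (∀ w ∈ p.support, w ∉ W) ∧
      (p.length : ℝ) ≤ 10 * ρ⁻¹ * Real.log ((Fintype.card V : ℝ) / x) := by
  set n : ℝ := (Fintype.card V : ℝ) with hn
  have hx0 : 0 < x := by linarith
  have hxn : x ≤ n := hX.trans (by rw [hn]; exact_mod_cast card_le_univ X)
  set r := ⌊5 * ρ⁻¹ * Real.log (n / x)⌋₊
  have hpow : n / 2 < 3 * x / 4 * (1 + ρ / 2) ^ r :=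
    calc n / 2 = 3 * x / 4 * (2 / 3 * (n / x)) := by field_simp; ring
      _ < _ := by
        gcongr
        exact two_thirds_mul_lt_pow_floor hρ0 hρ1 ((one_le_div hx0).2 hxn)
  have hball (S : Finset V) (hS : x ≤ #S) : n / 2 < #(ballIn G W (S \ W) r) := by
    have h34 : 3 * x / 4 ≤ #(S \ W) := by
      have : (#S : ℝ) ≤ #(S \ W) + #W := mod_cast card_le_card_sdiff_add_card
      nlinarith
    by_contra! hsmall
    have := hG.mul_pow_le_card_ballIn (by linarith) (by nlinarith) hρ0.le hsmall
    nlinarith [mul_le_mul_of_nonneg_right h34 (by positivity : (0 : ℝ) ≤ (1 + ρ / 2) ^ r)]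
  have hmeet : n < #(ballIn G W (X \ W) r) + #(ballIn G W (Y \ W) r) := by
    linarith [hball X hX, hball Y hY]
  rw [hn, ← card_univ] at hmeet
  obtain ⟨z, hz⟩ :=
    inter_nonempty_of_card_lt_card_add_card (subset_univ _) (subset_univ _) (mod_cast hmeet)
  obtain ⟨u, v, p, hu, hv, hp, hpW, hlen⟩ :=
    exists_path_of_mem_ballIn_inter sdiff_disjoint sdiff_disjoint (mem_inter.1 hz).1
      (mem_inter.1 hz).2
  refine ⟨u, v, p, (mem_sdiff.1 hu).1, (mem_sdiff.1 hv).1, hp, hpW, ?_⟩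
  have hr : (r : ℝ) ≤ 5 * ρ⁻¹ * Real.log (n / x) :=
    Nat.floor_le (by have := Real.log_nonneg ((one_le_div hx0).2 hxn); positivity)
  have : (p.length : ℝ) ≤ r + r := mod_cast hlen
  linarith
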